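/- Let (E,T,S,e) be a conditional expectation preserving system with T strictly positive. If (E,T,S,e) is conditionally weakly mixing, then (E,T,S,e) is ergodic. -/

import Mathlib

open Finset

/- `E` is a Riesz space (real vector lattice). -/
variable {E : Type*} [AddCommGroup E] [Lattice E]
  [CovariantClass E E (· + ·) (· ≤ ·)] [Module ℝ E] [PosSMulMono ℝ E]

/-- A sequence `u` in `E` order converges to `l` if there is a sequence `p` decreasing to `0`
with `|u n - l| ≤ p n` for all `n`. -/
def OrderConv (u : ℕ → E) (l : E) : Prop :=
  ∃ p : ℕ → E, Antitone p ∧ IsGLB (Set.range p) 0 ∧ ∀ n, |u n - l| ≤ p n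

/-- `l` is the greatest lower bound of `A` relative to the subset `F`. -/
def IsGLBIn (F A : Set E) (l : E) : Prop :=
  (∀ a ∈ A, l ≤ a) ∧ ∀ b ∈ F, (∀ a ∈ A, b ≤ a) → b ≤ l

/-- `F` is Dedekind complete (in its induced order): every nonempty subset of `F`
bounded above in `F` has a supremum in `F`. -/
def DedekindCompleteIn (F : Set E) : Prop :=
  ∀ A : Set E, A ⊆ F → A.Nonempty → (∃ b ∈ F, ∀ a ∈ A, a ≤ b) →
    ∃ s ∈ F, (∀ a ∈ A, a ≤ s) ∧ ∀ b ∈ F, (∀ a ∈ A, a ≤ b) → s ≤ b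

/-- `u` is a weak order unit of (the Riesz subspace) `F`:  `u > 0` and the band generated by
`u` is everything, equivalently no nonzero positive element of `F` is disjoint from `u`. -/
def IsWeakOrderUnitIn (F : Set E) (u : E) : Prop :=
  0 < u ∧ ∀ f ∈ F, 0 ≤ f → f ⊓ u = 0 → f = 0

/-- Band projections on a Riesz space: the linear idempotents `P` with `0 ≤ P ≤ I`. -/
def IsBandProjection (P : E →ₗ[ℝ] E) : Prop :=
  (∀ f, P (P f) = P f) ∧ ∀ f, 0 ≤ f → 0 ≤ P f ∧ P f ≤ f

/-- `L` (restricted to `F`) is a conditional expectation operator on `F`: a positive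
order continuous linear projection whose range is a Dedekind complete Riesz subspace and
which maps weak order units to weak order units. -/
def IsCondExpOn (F : Set E) (L : E → E) : Prop :=
  (∀ f ∈ F, L f ∈ F) ∧
  (∀ f ∈ F, ∀ g ∈ F, L (f + g) = L f + L g) ∧
  (∀ r : ℝ, ∀ f ∈ F, L (r • f) = r • L f) ∧
  (∀ f ∈ F, 0 ≤ f → 0 ≤ L f) ∧
  (∀ A : Set E, A ⊆ F → A.Nonempty → DirectedOn (· ≥ ·) A → IsGLBIn F A 0 →
      IsGLBIn F (L '' A) 0) ∧
  (∀ f ∈ F, L (L f) = L f) ∧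
  (∀ f ∈ L '' F, ∀ g ∈ L '' F, f ⊔ g ∈ L '' F) ∧
  DedekindCompleteIn (L '' F) ∧
  (∀ u ∈ F, IsWeakOrderUnitIn F u → IsWeakOrderUnitIn F (L u))

/-- Order continuity of a positive operator: downward directed sets with infimum `0`
are mapped to sets with infimum `0`. -/
def OrderContinuousOp (S : E →ₗ[ℝ] E) : Prop :=
  ∀ A : Set E, A.Nonempty → DirectedOn (· ≥ ·) A → IsGLB A 0 → IsGLB (S '' A) 0

/-- Riesz homomorphism: a linear map preserving the lattice operations. -/
def IsRieszHom (S : E →ₗ[ℝ] E) : Prop := ∀ f g, S (f ⊔ g) = S f ⊔ S g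

/-- `(E,T,S,e)` is a conditional expectation preserving system: `E` is a Dedekind complete
Riesz space with weak order unit `e`, `T` a conditional expectation operator on `E` with
`Te = e`, and `S` an order continuous Riesz homomorphism with `Se = e` and `TSPe = TPe`
for every band projection `P` on `E`. -/
def IsCEPS (T S : E →ₗ[ℝ] E) (e : E) : Prop :=
  DedekindCompleteIn (Set.univ : Set E) ∧
  IsWeakOrderUnitIn (Set.univ : Set E) e ∧
  IsCondExpOn Set.univ T ∧ T e = e ∧
  IsRieszHom S ∧ OrderContinuousOp S ∧ S e = e ∧
  ∀ P : E →ₗ[ℝ] E, IsBandProjection P → T (S (P e)) = T (P e)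

/-- The Cesàro means `S_n f = (1/n) ∑_{k=0}^{n-1} S^k f`. -/
noncomputable def ces (S : E →ₗ[ℝ] E) (f : E) (n : ℕ) : E :=
  (n : ℝ)⁻¹ • ∑ k ∈ Finset.range n, (S ^ k) f

/-- The principal ideal `E_e` generated by `e`. -/
def idealE (e : E) : Set E := {f : E | ∃ k : ℝ, 0 ≤ k ∧ |f| ≤ k • e}

/-- The system `(E,T,S,e)` is ergodic if `L_S f ∈ R(T)` for every `S`-invariant `f`
(where `L_S f` is any order limit of the Cesàro means of `f`). -/
def IsErgodic (T S : E →ₗ[ℝ] E) (e : E) : Prop :=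
  ∀ f l : E, S f = f → OrderConv (ces S f) l → l ∈ Set.range T

/-- `m` is the `f`-algebra multiplication on the principal ideal `E_e`:  commutative,
bilinear, positive, with unit `e`, determined on components by `Pe·Qe = PQe` for band
projections `P, Q`, and order continuous (so extendable from components by order limits). -/
def IsFAlgMulOn (e : E) (m : E → E → E) : Prop :=
  (∀ f ∈ idealE e, ∀ g ∈ idealE e, m f g ∈ idealE e) ∧
  (∀ f ∈ idealE e, ∀ g ∈ idealE e, m f g = m g f) ∧
  (∀ f ∈ idealE e, ∀ g ∈ idealE e, ∀ h ∈ idealE e, m (f + g) h = m f h + m g h) ∧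
  (∀ r : ℝ, ∀ f ∈ idealE e, ∀ g ∈ idealE e, m (r • f) g = r • m f g) ∧
  (∀ f ∈ idealE e, ∀ g ∈ idealE e, 0 ≤ f → 0 ≤ g → 0 ≤ m f g) ∧
  (∀ f ∈ idealE e, m e f = f) ∧
  (∀ P Q : E →ₗ[ℝ] E, IsBandProjection P → IsBandProjection Q → m (P e) (Q e) = P (Q e)) ∧
  (∀ g ∈ idealE e, 0 ≤ g → ∀ (u : ℕ → E) (l : E), (∀ n, u n ∈ idealE e) → l ∈ idealE e →
      OrderConv u l → OrderConv (fun n => m (u n) g) (m l g))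


section AuxErgodicProof

set_option linter.unusedSectionVars false
set_option linter.unusedVariables false
set_option linter.unusedTactic false
set_option maxHeartbeats 1000000




private def covSwapAux : CovariantClass E E (Function.swap (· + ·)) (· ≤ ·) :=
  ⟨fun a b c h => by simpa [add_comm] using add_le_add_left h a⟩

attribute [local instance] covSwapAux

private def orderedAddCommGroupOfLatticeAux : IsOrderedAddMonoid E :=
  {
    add_le_add_left := fun a b h c => add_le_add_left h c }

attribute [local instance] orderedAddCommGroupOfLatticeAux

lemma inf_add_le_aux {x y z : E} (hx : 0 ≤ x) (hy : 0 ≤ y) (hz : 0 ≤ z) :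
    x ⊓ (y + z) ≤ x ⊓ y + x ⊓ z := by
  have hxy0 : (0:E) ≤ x ⊓ y := le_inf hx hy
  have h1 : x ⊓ (y + z) ≤ (x ⊓ y) + z := by
    calc x ⊓ (y + z) ≤ (x + z) ⊓ (y + z) :=
          le_inf (inf_le_left.trans (le_add_of_nonneg_right hz)) inf_le_right
      _ = (x ⊓ y) + z := by rw [← inf_add]
  have key : x ⊓ ((x ⊓ y) + z) = (x ⊓ y) + ((x - (x ⊓ y)) ⊓ z) := by
    rw [add_inf, add_sub_cancel]
  calc x ⊓ (y + z) ≤ x ⊓ ((x ⊓ y) + z) := le_inf inf_le_left h1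
    _ = (x ⊓ y) + ((x - (x ⊓ y)) ⊓ z) := key
    _ ≤ (x ⊓ y) + (x ⊓ z) :=
        add_le_add_right (inf_le_inf_right z (sub_le_self x hxy0)) _
lemma inf_nat_smul_eq_zero {x y : E} (hx : 0 ≤ x) (hy : 0 ≤ y) (hxy : x ⊓ y = 0) :
    ∀ n : ℕ, x ⊓ ((n : ℝ) • y) = 0 := by
  intro n
  induction n with
  | zero => simpa using inf_of_le_right hx
  | succ n ih =>
      have hys : (0:E) ≤ (n:ℝ) • y := smul_nonneg (by positivity) hy
      have h1 : x ⊓ (((n:ℕ)+1 : ℝ) • y) ≤ x ⊓ ((n:ℝ) • y) + x ⊓ y := by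
        rw [add_smul, one_smul]
        exact inf_add_le_aux hx hys hy
      have h2 : (0:E) ≤ x ⊓ (((n:ℕ)+1 : ℝ) • y) :=
        le_inf hx (smul_nonneg (by positivity) hy)
      have := h1.trans_eq (by rw [ih, hxy, add_zero])
      have heq : x ⊓ (((n:ℕ)+1 : ℝ) • y) = 0 := le_antisymm this h2
      convert heq using 3
      push_cast; ring
lemma inf_real_smul_eq_zero {x y : E} (hx : 0 ≤ x) (hy : 0 ≤ y) (hxy : x ⊓ y = 0)
    {r : ℝ} (hr : 0 ≤ r) : x ⊓ (r • y) = 0 := by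
  obtain ⟨n, hn⟩ := exists_nat_ge r
  have h1 : r • y ≤ (n : ℝ) • y := by
    have : ((n:ℝ) - r) • y ≥ 0 := smul_nonneg (by linarith) hy
    have := add_le_add_left this (r • y)
    simpa [← add_smul] using this
  have h2 : x ⊓ (r • y) ≤ x ⊓ ((n:ℝ) • y) := inf_le_inf_left x h1
  have h3 : (0:E) ≤ x ⊓ (r • y) := le_inf hx (smul_nonneg hr hy)
  exact le_antisymm (h2.trans_eq (inf_nat_smul_eq_zero hx hy hxy n)) h3

lemma sub_posPart_sub (x a : E) : x - (x - a)⁺ = x ⊓ a := by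
  rw [posPart_def, sub_sup, sub_sub_cancel, sub_zero, inf_comm]

lemma posPart_le_posPart_add (x a : E) (ha : 0 ≤ a) : x⁺ ≤ (x - a)⁺ + a := by
  rw [posPart_def]
  refine sup_le ?_ (by positivity)
  calc x = (x - a) + a := by abel
    _ ≤ (x-a)⁺ + a := add_le_add_left (le_sup_left) a

lemma smul_inf_eq {r : ℝ} (hr : 0 < r) (a b : E) : r • (a ⊓ b) = (r • a) ⊓ (r • b) := by
  refine le_antisymm (le_inf (smul_le_smul_of_nonneg_left inf_le_left hr.le)
    (smul_le_smul_of_nonneg_left inf_le_right hr.le)) ?_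
  have h1 : r⁻¹ • ((r • a) ⊓ (r • b)) ≤ a ⊓ b := by
    refine le_inf ?_ ?_
    · have := smul_le_smul_of_nonneg_left (inf_le_left (a := r • a) (b := r • b)) (by positivity : (0:ℝ) ≤ r⁻¹)
      simpa [smul_smul, inv_mul_cancel₀ hr.ne'] using this
    · have := smul_le_smul_of_nonneg_left (inf_le_right (a := r • a) (b := r • b)) (by positivity : (0:ℝ) ≤ r⁻¹)
      simpa [smul_smul, inv_mul_cancel₀ hr.ne'] using this
  have := smul_le_smul_of_nonneg_left h1 hr.le
  simpa [smul_smul, mul_inv_cancel₀ hr.ne'] using this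

lemma smul_sup_eq {r : ℝ} (hr : 0 < r) (a b : E) : r • (a ⊔ b) = (r • a) ⊔ (r • b) := by
  refine le_antisymm ?_ (sup_le (smul_le_smul_of_nonneg_left le_sup_left hr.le)
    (smul_le_smul_of_nonneg_left le_sup_right hr.le))
  have h1 : a ⊔ b ≤ r⁻¹ • ((r • a) ⊔ (r • b)) := by
    refine sup_le ?_ ?_
    · have := smul_le_smul_of_nonneg_left (le_sup_left (a := r • a) (b := r • b)) (by positivity : (0:ℝ) ≤ r⁻¹)
      simpa [smul_smul, inv_mul_cancel₀ hr.ne'] using this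
    · have := smul_le_smul_of_nonneg_left (le_sup_right (a := r • a) (b := r • b)) (by positivity : (0:ℝ) ≤ r⁻¹)
      simpa [smul_smul, inv_mul_cancel₀ hr.ne'] using this
  have := smul_le_smul_of_nonneg_left h1 hr.le
  simpa [smul_smul, mul_inv_cancel₀ hr.ne'] using this

lemma exists_isLUB' (hD : DedekindCompleteIn (Set.univ : Set E)) (A : Set E)
    (hne : A.Nonempty) (hbd : BddAbove A) : ∃ s, IsLUB A s := by
  obtain ⟨b, hb⟩ := hbd
  obtain ⟨s, -, h1, h2⟩ := hD A (Set.subset_univ A) hne ⟨b, Set.mem_univ b, fun a ha => hb ha⟩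
  exact ⟨s, ⟨fun a ha => h1 a ha, fun c hc => h2 c (Set.mem_univ c) (fun a ha => hc ha)⟩⟩

lemma arch_zero (hD : DedekindCompleteIn (Set.univ : Set E)) {c b : E} (hc : 0 ≤ c)
    (h : ∀ n : ℕ, (n : ℝ) • c ≤ b) : c = 0 := by
  obtain ⟨σ, hσ⟩ := exists_isLUB' hD (Set.range fun n : ℕ => (n:ℝ) • c) ⟨_, ⟨0, rfl⟩⟩
    ⟨b, by rintro x ⟨n, rfl⟩; exact h n⟩
  have h1 : ∀ n : ℕ, (n:ℝ) • c ≤ σ - c := by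
    intro n
    have : ((n:ℝ) + 1) • c ≤ σ := by
      have : (((n+1 : ℕ)):ℝ) • c ≤ σ := hσ.1 ⟨n+1, rfl⟩
      convert this using 2; push_cast; ring
    rw [add_smul, one_smul] at this
    exact le_sub_iff_add_le.2 this
  have h2 : σ ≤ σ - c := hσ.2 (by rintro x ⟨n, rfl⟩; exact h1 n)
  have : c ≤ 0 := by
    have := sub_le_sub_right h2 σ; simpa using this
  exact le_antisymm this hc




noncomputable def pPart (hD : DedekindCompleteIn (Set.univ : Set E)) (g x : E) : E :=
  Classical.choose (exists_isLUB' hD (Set.range fun n : ℕ => x ⊓ (n:ℝ) • g) ⟨_, ⟨0, rfl⟩⟩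
    ⟨x, by rintro y ⟨n, rfl⟩; exact inf_le_left⟩)

variable (hD : DedekindCompleteIn (Set.univ : Set E))

lemma pPart_isLUB (g x : E) :
    IsLUB (Set.range fun n : ℕ => x ⊓ (n:ℝ) • g) (pPart hD g x) :=
  Classical.choose_spec _

lemma pPart_mem_le (g x : E) (n : ℕ) : x ⊓ (n:ℝ) • g ≤ pPart hD g x :=
  (pPart_isLUB hD g x).1 ⟨n, rfl⟩

lemma pPart_le_self (g x : E) : pPart hD g x ≤ x :=
  (pPart_isLUB hD g x).2 (by rintro y ⟨n, rfl⟩; exact inf_le_left)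

lemma pPart_nonneg (g : E) {x : E} (hx : 0 ≤ x) : 0 ≤ pPart hD g x := by
  have := pPart_mem_le hD g x 0
  simpa [inf_of_le_right hx] using this

lemma pPart_zero (g : E) : pPart hD g 0 = 0 :=
  le_antisymm (pPart_le_self hD g 0) (pPart_nonneg hD g le_rfl)

lemma smul_cast_nat_nonneg (n : ℕ) {g : E} (hg : 0 ≤ g) : (0:E) ≤ (n:ℝ) • g :=
  smul_nonneg (by positivity) hg

lemma pPart_add {g : E} (hg : 0 ≤ g) {x y : E} (hx : 0 ≤ x) (hy : 0 ≤ y) :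
    pPart hD g (x + y) = pPart hD g x + pPart hD g y := by
  refine le_antisymm ?_ ?_
  · refine (pPart_isLUB hD g (x+y)).2 ?_
    rintro z ⟨n, rfl⟩
    have hng : (0:E) ≤ (n:ℝ) • g := smul_cast_nat_nonneg n hg
    have h1 : (x + y) ⊓ ((n:ℝ) • g) ≤ ((n:ℝ) • g) ⊓ x + ((n:ℝ) • g) ⊓ y := by
      rw [inf_comm]
      exact inf_add_le_aux hng hx hy
    refine h1.trans (add_le_add ?_ ?_)
    · rw [inf_comm]; exact pPart_mem_le hD g x n
    · rw [inf_comm]; exact pPart_mem_le hD g y n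
  · have key : ∀ n m : ℕ, x ⊓ ((n:ℝ) • g) + y ⊓ ((m:ℝ) • g) ≤ pPart hD g (x + y) := by
      intro n m
      have h1 : x ⊓ ((n:ℝ) • g) + y ⊓ ((m:ℝ) • g) ≤ (x + y) ⊓ (((n+m : ℕ):ℝ) • g) := by
        refine le_inf (add_le_add inf_le_left inf_le_left) ?_
        have : ((n+m : ℕ):ℝ) • g = (n:ℝ) • g + (m:ℝ) • g := by
          push_cast; rw [add_smul]
        rw [this]
        exact add_le_add inf_le_right inf_le_right
      exact h1.trans (pPart_mem_le hD g (x+y) (n+m))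
    have step : ∀ n : ℕ, x ⊓ ((n:ℝ) • g) + pPart hD g y ≤ pPart hD g (x + y) := by
      intro n
      have : pPart hD g y ≤ pPart hD g (x+y) - x ⊓ ((n:ℝ) • g) := by
        refine (pPart_isLUB hD g y).2 ?_
        rintro z ⟨m, rfl⟩
        rw [le_sub_iff_add_le, add_comm]
        exact key n m
      calc x ⊓ ((n:ℝ) • g) + pPart hD g y
          ≤ x ⊓ ((n:ℝ) • g) + (pPart hD g (x+y) - x ⊓ ((n:ℝ) • g)) := add_le_add_right this _
        _ = pPart hD g (x+y) := by abel
    have : pPart hD g x ≤ pPart hD g (x+y) - pPart hD g y := by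
      refine (pPart_isLUB hD g x).2 ?_
      rintro z ⟨n, rfl⟩
      rw [le_sub_iff_add_le]
      exact step n
    have := add_le_add_left this (pPart hD g y)
    simpa using this

lemma pPart_smul {g : E} (hg : 0 ≤ g) {r : ℝ} (hr : 0 < r) (x : E) :
    pPart hD g (r • x) = r • pPart hD g x := by
  have smul_mono_g : ∀ {s t : ℝ}, s ≤ t → s • g ≤ t • g := by
    intro s t hst
    have h0 : (0:E) ≤ (t - s) • g := smul_nonneg (by linarith) hg
    have := add_le_add_left h0 (s • g)
    simpa [← add_smul] using this
  refine le_antisymm ?_ ?_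
  · refine (pPart_isLUB hD g (r • x)).2 ?_
    rintro z ⟨n, rfl⟩
    set m : ℕ := ⌈(n:ℝ) / r⌉₊ with hm
    have hnm : (n:ℝ) ≤ r * m := by
      have h1 : (n:ℝ)/r ≤ (m:ℝ) := Nat.le_ceil _
      calc (n:ℝ) = r * ((n:ℝ)/r) := by field_simp
        _ ≤ r * m := by nlinarith [hr.le]
    have h2 : (r • x) ⊓ ((n:ℝ) • g) ≤ (r • x) ⊓ ((r * m) • g) :=
      inf_le_inf_left _ (smul_mono_g hnm)
    have h3 : (r • x) ⊓ ((r * m) • g) = r • (x ⊓ ((m:ℝ) • g)) := by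
      rw [smul_inf_eq hr, smul_smul]
    refine h2.trans ?_
    rw [h3]
    exact smul_le_smul_of_nonneg_left (pPart_mem_le hD g x m) hr.le
  · have h1 : pPart hD g x ≤ r⁻¹ • pPart hD g (r • x) := by
      refine (pPart_isLUB hD g x).2 ?_
      rintro z ⟨n, rfl⟩
      set m : ℕ := ⌈r * n⌉₊ with hm
      have hrn : r * n ≤ (m:ℝ) := Nat.le_ceil _
      have h2 : r • (x ⊓ ((n:ℝ) • g)) = (r • x) ⊓ ((r * n) • g) := by
        rw [smul_inf_eq hr, smul_smul]
      have h3 : (r • x) ⊓ ((r * n) • g) ≤ (r • x) ⊓ ((m:ℝ) • g) :=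
        inf_le_inf_left _ (smul_mono_g hrn)
      have h4 : r • (x ⊓ ((n:ℝ) • g)) ≤ pPart hD g (r • x) :=
        (h2.le.trans h3).trans (pPart_mem_le hD g (r • x) m)
      have := smul_le_smul_of_nonneg_left h4 (by positivity : (0:ℝ) ≤ r⁻¹)
      simpa [smul_smul, inv_mul_cancel₀ hr.ne'] using this
    have := smul_le_smul_of_nonneg_left h1 hr.le
    simpa [smul_smul, mul_inv_cancel₀ hr.ne'] using this

lemma pPart_idem (g : E) (x : E) : pPart hD g (pPart hD g x) = pPart hD g x := by
  refine le_antisymm (pPart_le_self hD g _) ?_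
  refine (pPart_isLUB hD g x).2 ?_
  rintro z ⟨n, rfl⟩
  have h1 : x ⊓ ((n:ℝ) • g) ≤ (pPart hD g x) ⊓ ((n:ℝ) • g) :=
    le_inf (pPart_mem_le hD g x n) inf_le_right
  exact h1.trans (pPart_mem_le hD g (pPart hD g x) n)

lemma pPart_self {g : E} (hg : 0 ≤ g) : pPart hD g g = g := by
  refine le_antisymm (pPart_le_self hD g g) ?_
  have := pPart_mem_le hD g g 1
  simpa using this

lemma pPart_disj {g x : E} (hx : 0 ≤ x) (hg : 0 ≤ g) (hxg : x ⊓ g = 0) :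
    pPart hD g x = 0 := by
  refine le_antisymm ?_ (pPart_nonneg hD g hx)
  refine (pPart_isLUB hD g x).2 ?_
  rintro z ⟨n, rfl⟩
  exact (inf_nat_smul_eq_zero hx hg hxg n).le

lemma smul_inf_le_smul_pPart {g : E} (hg : 0 ≤ g) {t : ℝ} (ht : 0 < t) (x : E) :
    (t • x) ⊓ g ≤ t • pPart hD g x := by
  set n : ℕ := ⌈t⁻¹⌉₊ with hn
  have htn : 1 ≤ t * n := by
    have h1 : t⁻¹ ≤ (n:ℝ) := Nat.le_ceil _
    calc (1:ℝ) = t * t⁻¹ := by field_simp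
      _ ≤ t * n := by nlinarith [ht.le]
  have h0 : g ≤ (t * n) • g := by
    have h2 : (0:E) ≤ (t * n - 1) • g := smul_nonneg (by linarith) hg
    have h3 := add_le_add_right h2 ((1:ℝ) • g)
    rw [← add_smul, add_zero] at h3
    simpa using h3
  have h1 : (t • x) ⊓ g ≤ (t • x) ⊓ ((t * n) • g) := inf_le_inf_left _ h0
  have h2 : (t • x) ⊓ ((t * n) • g) = t • (x ⊓ ((n:ℝ) • g)) := by
    rw [smul_inf_eq ht, smul_smul]
  refine h1.trans (h2.le.trans ?_)
  exact smul_le_smul_of_nonneg_left (pPart_mem_le hD g x n) ht.le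




variable (hD : DedekindCompleteIn (Set.univ : Set E))

lemma posPart_eq_add_negPart (a : E) : a⁺ = a + a⁻ :=
  eq_add_of_sub_eq (posPart_sub_negPart a)

lemma posPart_smul_pos {r : ℝ} (hr : 0 < r) (x : E) : (r • x)⁺ = r • x⁺ := by
  rw [posPart_def, posPart_def, smul_sup_eq hr, smul_zero]

lemma negPart_smul_pos {r : ℝ} (hr : 0 < r) (x : E) : (r • x)⁻ = r • x⁻ := by
  rw [negPart_def, negPart_def, smul_sup_eq hr, smul_zero, smul_neg]

noncomputable def bProj {g : E} (hg : 0 ≤ g) : E →ₗ[ℝ] E where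
  toFun x := pPart hD g x⁺ - pPart hD g x⁻
  map_add' x y := by
    have id1 : (x+y)⁺ + (x⁻ + y⁻) = (x+y)⁻ + (x⁺ + y⁺) := by
      rw [posPart_eq_add_negPart (x+y), posPart_eq_add_negPart x, posPart_eq_add_negPart y]
      abel
    have heq : pPart hD g (x+y)⁺ + (pPart hD g x⁻ + pPart hD g y⁻)
        = pPart hD g (x+y)⁻ + (pPart hD g x⁺ + pPart hD g y⁺) := by
      rw [← pPart_add hD hg (negPart_nonneg x) (negPart_nonneg y),
        ← pPart_add hD hg (posPart_nonneg _) (add_nonneg (negPart_nonneg x) (negPart_nonneg y)),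
        ← pPart_add hD hg (posPart_nonneg x) (posPart_nonneg y),
        ← pPart_add hD hg (negPart_nonneg _) (add_nonneg (posPart_nonneg x) (posPart_nonneg y)),
        id1]
    calc pPart hD g (x+y)⁺ - pPart hD g (x+y)⁻
        = (pPart hD g (x+y)⁺ + (pPart hD g x⁻ + pPart hD g y⁻))
          - (pPart hD g (x+y)⁻ + (pPart hD g x⁻ + pPart hD g y⁻)) := by abel
      _ = (pPart hD g (x+y)⁻ + (pPart hD g x⁺ + pPart hD g y⁺))
          - (pPart hD g (x+y)⁻ + (pPart hD g x⁻ + pPart hD g y⁻)) := by rw [heq]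
      _ = (pPart hD g x⁺ - pPart hD g x⁻) + (pPart hD g y⁺ - pPart hD g y⁻) := by abel
  map_smul' r x := by
    simp only [RingHom.id_apply]
    rcases lt_trichotomy r 0 with hr | hr | hr
    · have hs : 0 < -r := by linarith
      have hrx : r • x = (-r) • (-x) := by simp
      have h1 : (r • x)⁺ = (-r) • x⁻ := by
        rw [hrx, posPart_smul_pos hs, posPart_neg]
      have h2 : (r • x)⁻ = (-r) • x⁺ := by
        rw [hrx, negPart_smul_pos hs, negPart_neg]
      rw [h1, h2, pPart_smul hD hg hs, pPart_smul hD hg hs]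
      module
    · simp [hr, pPart_zero]
    · rw [posPart_smul_pos hr, negPart_smul_pos hr, pPart_smul hD hg hr,
        pPart_smul hD hg hr, smul_sub]

lemma bProj_of_nonneg {g : E} (hg : 0 ≤ g) {x : E} (hx : 0 ≤ x) :
    bProj hD hg x = pPart hD g x := by
  show pPart hD g x⁺ - pPart hD g x⁻ = pPart hD g x
  rw [posPart_eq_self.2 hx, negPart_eq_zero.2 hx, pPart_zero, sub_zero]

lemma bProj_isBandProjection {g : E} (hg : 0 ≤ g) : IsBandProjection (bProj hD hg) := by
  constructor
  · intro f
    have hexp : bProj hD hg f = pPart hD g f⁺ - pPart hD g f⁻ := rfl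
    rw [hexp, map_sub,
      bProj_of_nonneg hD hg (pPart_nonneg hD g (posPart_nonneg f)),
      bProj_of_nonneg hD hg (pPart_nonneg hD g (negPart_nonneg f)),
      pPart_idem, pPart_idem, ← hexp]
  · intro f hf
    rw [bProj_of_nonneg hD hg hf]
    exact ⟨pPart_nonneg hD g hf, pPart_le_self hD g f⟩

lemma riesz_hom_inf {S : E →ₗ[ℝ] E} (hS : IsRieszHom S) (a b : E) :
    S (a ⊓ b) = S a ⊓ S b := by
  have h1 : a ⊓ b = a + b - (a ⊔ b) := by
    rw [← inf_add_sup a b]; abel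
  have h2 : S a ⊓ S b = S a + S b - (S a ⊔ S b) := by
    rw [← inf_add_sup (S a) (S b)]; abel
  rw [h1, h2, map_sub, map_add, hS]

lemma riesz_hom_posPart {S : E →ₗ[ℝ] E} (hS : IsRieszHom S) (a : E) :
    S a⁺ = (S a)⁺ := by
  rw [posPart_def, posPart_def, hS, map_zero]

lemma riesz_hom_nonneg {S : E →ₗ[ℝ] E} (hS : IsRieszHom S) {a : E} (ha : 0 ≤ a) :
    0 ≤ S a := by
  have : S a⁺ = (S a)⁺ := riesz_hom_posPart hS a
  rw [posPart_eq_self.2 ha] at this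
  rw [this]
  exact posPart_nonneg _

lemma pPart_S_fixed {S : E →ₗ[ℝ] E} (hS : IsRieszHom S) (hSc : OrderContinuousOp S)
    {e g : E} (hSe : S e = e) (hSg : S g = g) (hg : 0 ≤ g) :
    S (pPart hD g e) = pPart hD g e := by
  set q := pPart hD g e with hq
  have hmem : ∀ n : ℕ, e ⊓ (n:ℝ) • g ≤ q := fun n => pPart_mem_le hD g e n
  have hmono : ∀ {n m : ℕ}, n ≤ m → e ⊓ (n:ℝ) • g ≤ e ⊓ (m:ℝ) • g := by
    intro n m hnm
    refine inf_le_inf_left e ?_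
    have hcast : (n:ℝ) ≤ (m:ℝ) := by exact_mod_cast hnm
    have h0 : (0:E) ≤ ((m:ℝ) - (n:ℝ)) • g := smul_nonneg (by linarith) hg
    have := add_le_add_left h0 ((n:ℝ) • g)
    rw [← add_smul] at this
    simpa using this
  set A : Set E := Set.range (fun n : ℕ => q - e ⊓ (n:ℝ) • g) with hA
  have hne : A.Nonempty := ⟨_, ⟨0, rfl⟩⟩
  have hdir : DirectedOn (· ≥ ·) A := by
    rintro x ⟨n, rfl⟩ y ⟨m, rfl⟩
    refine ⟨q - e ⊓ ((max n m : ℕ):ℝ) • g, ⟨max n m, rfl⟩, ?_, ?_⟩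
    · exact sub_le_sub_left (hmono (le_max_left n m)) q
    · exact sub_le_sub_left (hmono (le_max_right n m)) q
  have hglb : IsGLB A 0 := by
    constructor
    · rintro x ⟨n, rfl⟩
      simpa using sub_nonneg.2 (hmem n)
    · intro b hb
      have h1 : ∀ n : ℕ, e ⊓ (n:ℝ) • g ≤ q - b := by
        intro n
        have h := hb ⟨n, rfl⟩
        have h2 := add_le_add_left h (e ⊓ (n:ℝ) • g)
        rw [sub_add_cancel] at h2
        have h3 := sub_le_sub_right h2 b
        simpa using h3
      have h2 : q ≤ q - b := (pPart_isLUB hD g e).2 (by rintro x ⟨n, rfl⟩; exact h1 n)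
      simpa using sub_nonneg.2 h2
  have himg : IsGLB (S '' A) 0 := hSc A hne hdir hglb
  have himgeq : S '' A = Set.range (fun n : ℕ => S q - e ⊓ (n:ℝ) • g) := by
    have hfun : (S ∘ fun n : ℕ => q - e ⊓ (n:ℝ) • g) = fun n : ℕ => S q - e ⊓ (n:ℝ) • g := by
      funext n
      simp only [Function.comp_apply]
      rw [map_sub, riesz_hom_inf hS, map_smul, hSg, hSe]
    rw [hA, ← Set.range_comp, hfun]
  rw [himgeq] at himg
  have hup : q ≤ S q := by
    refine (pPart_isLUB hD g e).2 ?_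
    rintro x ⟨n, rfl⟩
    have h := himg.1 ⟨n, rfl⟩
    have h2 := add_le_add_right h (e ⊓ (n:ℝ) • g)
    rw [add_sub_cancel] at h2
    simpa using h2
  have hdown : S q ≤ q := by
    have hlb : S q - q ∈ lowerBounds (Set.range (fun n : ℕ => S q - e ⊓ (n:ℝ) • g)) := by
      rintro x ⟨n, rfl⟩
      exact sub_le_sub_left (hmem n) (S q)
    have h := himg.2 hlb
    have h2 := add_le_add_left h q
    rw [sub_add_cancel] at h2
    simpa using h2
  exact le_antisymm hdown hup




variable (hD : DedekindCompleteIn (Set.univ : Set E))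

lemma smul_le_smul_vec {r : ℝ} {a b : E} (hr : 0 ≤ r) (hab : a ≤ b) : r • a ≤ r • b :=
  smul_le_smul_of_nonneg_left hab hr

lemma smul_mono_scalar {s u : ℝ} {a : E} (ha : 0 ≤ a) (hsu : s ≤ u) : s • a ≤ u • a := by
  have h0 : (0:E) ≤ (u - s) • a := smul_nonneg (by linarith) ha
  have := add_le_add_left h0 (s • a)
  rw [← add_smul] at this
  simpa using this

section sandwich

variable {e v : E} {t c : ℝ}

/-- the `j`-th tail part -/
noncomputable abbrev fGap (v e : E) (t : ℝ) (j : ℕ) : E := (v - ((j:ℝ)*t) • e)⁺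

noncomputable abbrev fCmp (hD : DedekindCompleteIn (Set.univ : Set E)) (v e : E) (t : ℝ)
    (j : ℕ) : E := pPart hD (fGap v e t j) e

lemma fGap_nonneg (j : ℕ) : 0 ≤ fGap v e t j := posPart_nonneg _

lemma fCmp_nonneg (he : 0 ≤ e) (j : ℕ) : 0 ≤ fCmp hD v e t j :=
  pPart_nonneg hD _ he

lemma fCmp_le_e (j : ℕ) : fCmp hD v e t j ≤ e := pPart_le_self hD _ e

lemma fGap_zero (hv : 0 ≤ v) : fGap v e t 0 = v := by
  simp [fGap, posPart_eq_self.2 hv]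

lemma fGap_eq_zero (he : 0 ≤ e) (hub : v ≤ c • e) (ht : 0 < t) {K j : ℕ} (hK : c ≤ K * t)
    (hj : K ≤ j) : fGap v e t j = 0 := by
  rw [posPart_eq_zero]
  rw [sub_nonpos]
  refine hub.trans (smul_mono_scalar he ?_)
  have : (K:ℝ) * t ≤ (j:ℝ) * t := by
    have : (K:ℝ) ≤ (j:ℝ) := by exact_mod_cast hj
    nlinarith [ht.le]
  linarith

lemma fGap_succ (j : ℕ) : fGap v e t (j+1) = ((v - ((j:ℝ)*t) • e) - t • e)⁺ := by
  have : ((j:ℕ)+1 : ℝ) * t = (j:ℝ)*t + t := by push_cast; ring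
  rw [fGap]
  push_cast
  rw [show ((j:ℝ)+1) * t = (j:ℝ)*t + t by ring, add_smul, sub_add_eq_sub_sub]

lemma fGap_succ_le (j : ℕ) : fGap v e t (j+1) ≤ (fGap v e t j - t • e)⁺ := by
  rw [fGap_succ]
  refine posPart_mono ?_
  exact sub_le_sub_right (le_posPart _) _

lemma fGap_sub_succ_ge (j : ℕ) : fGap v e t j ⊓ t • e ≤ fGap v e t j - fGap v e t (j+1) := by
  have h1 := fGap_succ_le (v := v) (e := e) (t := t) j
  have h2 : fGap v e t j - (fGap v e t j - t • e)⁺ = fGap v e t j ⊓ (t • e) :=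
    sub_posPart_sub _ _
  calc fGap v e t j ⊓ t • e = fGap v e t j - (fGap v e t j - t • e)⁺ := h2.symm
    _ ≤ fGap v e t j - fGap v e t (j+1) := sub_le_sub_left h1 _

lemma fGap_sub_succ_le (he : 0 ≤ e) (ht : 0 < t) (j : ℕ) :
    fGap v e t j - fGap v e t (j+1) ≤ fGap v e t j ⊓ t • e := by
  refine le_inf (sub_le_self _ (fGap_nonneg _)) ?_
  rw [sub_le_iff_le_add, add_comm]
  rw [fGap_succ]
  exact posPart_le_posPart_add _ _ (smul_nonneg ht.le he)

lemma step2 (he : 0 ≤ e) (ht : 0 < t) (j : ℕ) :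
    fGap v e t j - fGap v e t (j+1) ≤ t • fCmp hD v e t j := by
  refine (fGap_sub_succ_le he ht j).trans ?_
  rw [inf_comm]
  exact smul_inf_le_smul_pPart hD (fGap_nonneg j) ht e

lemma step1 (he : 0 ≤ e) (ht : 0 < t) (j : ℕ) :
    t • fCmp hD v e t (j+1) + fGap v e t (j+1) ≤ fGap v e t j := by
  have key : t • fCmp hD v e t (j+1) ≤ fGap v e t j ⊓ t • e := by
    have hq : fCmp hD v e t (j+1) ≤ t⁻¹ • (fGap v e t j ⊓ t • e) := by
      refine (pPart_isLUB hD (fGap v e t (j+1)) e).2 ?_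
      rintro x ⟨n, rfl⟩
      have hw : t • (e ⊓ (n:ℝ) • fGap v e t (j+1)) ≤ fGap v e t j ⊓ t • e := by
        set w := t • (e ⊓ (n:ℝ) • fGap v e t (j+1)) with hwdef
        have hw0 : 0 ≤ w :=
          smul_nonneg ht.le (le_inf he (smul_nonneg (by positivity) (fGap_nonneg _)))
        have hwte : w ≤ t • e := smul_le_smul_vec ht.le inf_le_left
        have hwg : w ≤ (t * n) • (fGap v e t j - t • e)⁺ := by
          have h1 : w ≤ t • ((n:ℝ) • fGap v e t (j+1)) := smul_le_smul_vec ht.le inf_le_right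
          have h2 : (n:ℝ) • fGap v e t (j+1) ≤ (n:ℝ) • (fGap v e t j - t • e)⁺ :=
            smul_le_smul_vec (by positivity) (fGap_succ_le j)
          calc w ≤ t • ((n:ℝ) • fGap v e t (j+1)) := h1
            _ ≤ t • ((n:ℝ) • (fGap v e t j - t • e)⁺) := smul_le_smul_vec ht.le h2
            _ = (t * n) • (fGap v e t j - t • e)⁺ := by rw [smul_smul]
        have hdisj : (t • e - fGap v e t j)⁺ ⊓ (fGap v e t j - t • e)⁺ = 0 := by
          have h1 : (t • e - fGap v e t j)⁺ = (fGap v e t j - t • e)⁻ := by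
            rw [← posPart_neg]; congr 1; abel
          rw [h1, inf_comm]
          exact posPart_inf_negPart_eq_zero _
        have hwdisj : w ⊓ (t • e - fGap v e t j)⁺ = 0 := by
          refine le_antisymm ?_ (le_inf hw0 (posPart_nonneg _))
          have h1 : w ⊓ (t • e - fGap v e t j)⁺ ≤
              ((t • e - fGap v e t j)⁺) ⊓ ((t * n) • (fGap v e t j - t • e)⁺) := by
            rw [inf_comm]
            exact inf_le_inf_left _ hwg
          refine h1.trans_eq ?_
          exact inf_real_smul_eq_zero (posPart_nonneg _) (posPart_nonneg _) hdisj
            (by positivity)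
        have hwle : w ≤ fGap v e t j + (t • e - fGap v e t j)⁺ := by
          refine hwte.trans ?_
          calc t • e = fGap v e t j + (t • e - fGap v e t j) := by abel
            _ ≤ fGap v e t j + (t • e - fGap v e t j)⁺ := add_le_add_right (le_posPart _) _
        have hfinal : w ≤ fGap v e t j := by
          have h1 : w = w ⊓ (fGap v e t j + (t • e - fGap v e t j)⁺) := (inf_of_le_left hwle).symm
          have h2 : w ⊓ (fGap v e t j + (t • e - fGap v e t j)⁺)
              ≤ w ⊓ fGap v e t j + w ⊓ (t • e - fGap v e t j)⁺ :=
            inf_add_le_aux hw0 (fGap_nonneg j) (posPart_nonneg _)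
          rw [hwdisj, add_zero] at h2
          exact (h1.le.trans h2).trans inf_le_right
        exact le_inf hfinal hwte
      have := smul_le_smul_vec (by positivity : (0:ℝ) ≤ t⁻¹) hw
      rwa [smul_smul, inv_mul_cancel₀ ht.ne', one_smul] at this
    have := smul_le_smul_vec ht.le hq
    rwa [smul_smul, mul_inv_cancel₀ ht.ne', one_smul] at this
  calc t • fCmp hD v e t (j+1) + fGap v e t (j+1)
      ≤ fGap v e t j ⊓ t • e + fGap v e t (j+1) := add_le_add_left key _
    _ ≤ (fGap v e t j - fGap v e t (j+1)) + fGap v e t (j+1) :=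
        add_le_add_left (fGap_sub_succ_ge j) _
    _ = fGap v e t j := by abel

lemma claim1 (he : 0 ≤ e) (hv : 0 ≤ v) (ht : 0 < t) :
    ∀ m : ℕ, (∑ j ∈ Ico 1 (m+1), t • fCmp hD v e t j) + fGap v e t m ≤ v := by
  intro m
  induction m with
  | zero => simp [fGap_zero hv]
  | succ m ih =>
      rw [sum_Ico_succ_top (by omega : 1 ≤ m+1)]
      calc (∑ j ∈ Ico 1 (m+1), t • fCmp hD v e t j) + t • fCmp hD v e t (m+1)
            + fGap v e t (m+1)
          = (∑ j ∈ Ico 1 (m+1), t • fCmp hD v e t j)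
            + (t • fCmp hD v e t (m+1) + fGap v e t (m+1)) := by abel
        _ ≤ (∑ j ∈ Ico 1 (m+1), t • fCmp hD v e t j) + fGap v e t m :=
            add_le_add_right (step1 hD he ht m) _
        _ ≤ v := ih

lemma claim2 (he : 0 ≤ e) (hv : 0 ≤ v) (ht : 0 < t) {K : ℕ} (hub : v ≤ c • e)
    (hK : c ≤ K * t) :
    v ≤ (∑ j ∈ Ico 1 (K+1), t • fCmp hD v e t j) + t • e := by
  have htel : ∑ j ∈ range (K+1), (fGap v e t j - fGap v e t (j+1)) = v := by
    rw [Finset.sum_range_sub' (fun j => fGap v e t j) (K+1)]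
    rw [fGap_zero hv, fGap_eq_zero he hub ht hK (by omega), sub_zero]
  have h1 : v ≤ ∑ j ∈ range (K+1), t • fCmp hD v e t j := by
    calc v = ∑ j ∈ range (K+1), (fGap v e t j - fGap v e t (j+1)) := htel.symm
      _ ≤ ∑ j ∈ range (K+1), t • fCmp hD v e t j :=
          Finset.sum_le_sum (fun j _ => step2 hD he ht j)
  have h2 : ∑ j ∈ range (K+1), t • fCmp hD v e t j
      = t • fCmp hD v e t 0 + ∑ j ∈ Ico 1 (K+1), t • fCmp hD v e t j := by
    rw [Finset.range_eq_Ico, Finset.sum_eq_sum_Ico_succ_bot (by omega : 0 < K+1)]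
  have h3 : t • fCmp hD v e t 0 ≤ t • e := smul_le_smul_vec ht.le (fCmp_le_e hD 0)
  calc v ≤ ∑ j ∈ range (K+1), t • fCmp hD v e t j := h1
    _ = t • fCmp hD v e t 0 + ∑ j ∈ Ico 1 (K+1), t • fCmp hD v e t j := h2
    _ ≤ t • e + ∑ j ∈ Ico 1 (K+1), t • fCmp hD v e t j := add_le_add_left h3 _
    _ = (∑ j ∈ Ico 1 (K+1), t • fCmp hD v e t j) + t • e := by abel

lemma claim1' (he : 0 ≤ e) (hv : 0 ≤ v) (ht : 0 < t) (K : ℕ) :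
    (∑ j ∈ Ico 1 (K+1), t • fCmp hD v e t j) ≤ v := by
  have := claim1 hD (v := v) he hv ht K
  have h2 : (0:E) ≤ fGap v e t K := fGap_nonneg K
  calc (∑ j ∈ Ico 1 (K+1), t • fCmp hD v e t j)
      ≤ (∑ j ∈ Ico 1 (K+1), t • fCmp hD v e t j) + fGap v e t K := le_add_of_nonneg_right h2
    _ ≤ v := this

end sandwich




/-! ### ideal membership helpers -/

lemma mem_idealE_of {e x : E} {k : ℝ} (hx : 0 ≤ x) (hk : 0 ≤ k) (hxk : x ≤ k • e) :
    x ∈ idealE e := ⟨k, hk, by rwa [abs_of_nonneg hx]⟩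

lemma mem_idealE01 {e x : E} (hx : 0 ≤ x) (hxe : x ≤ e) : x ∈ idealE e :=
  mem_idealE_of hx zero_le_one (by rwa [one_smul])

lemma mem_idealE_e {e : E} (he : 0 ≤ e) : e ∈ idealE e := mem_idealE01 he le_rfl

lemma mem_idealE_zero (e : E) : (0 : E) ∈ idealE e :=
  ⟨0, le_rfl, by simp⟩

lemma mem_idealE_add {e x y : E} (hx : x ∈ idealE e) (hy : y ∈ idealE e) :
    x + y ∈ idealE e := by
  obtain ⟨k, hk, hkx⟩ := hx
  obtain ⟨k', hk', hky⟩ := hy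
  refine ⟨k + k', by linarith, ?_⟩
  calc |x + y| ≤ |x| + |y| := abs_add_le x y
    _ ≤ k • e + k' • e := add_le_add hkx hky
    _ = (k + k') • e := (add_smul k k' e).symm

lemma mem_idealE_neg {e x : E} (hx : x ∈ idealE e) : -x ∈ idealE e := by
  obtain ⟨k, hk, hkx⟩ := hx
  exact ⟨k, hk, by rwa [abs_neg]⟩

lemma mem_idealE_sub {e x y : E} (hx : x ∈ idealE e) (hy : y ∈ idealE e) :
    x - y ∈ idealE e := by
  rw [sub_eq_add_neg]
  exact mem_idealE_add hx (mem_idealE_neg hy)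

lemma mem_idealE_smul_nonneg {e x : E} {r : ℝ} (hr : 0 ≤ r) (hx0 : 0 ≤ x)
    (hx : x ∈ idealE e) : r • x ∈ idealE e := by
  obtain ⟨k, hk, hkx⟩ := hx
  rw [abs_of_nonneg hx0] at hkx
  refine mem_idealE_of (smul_nonneg hr hx0) (mul_nonneg hr hk) ?_
  calc r • x ≤ r • (k • e) := smul_le_smul_vec hr hkx
    _ = (r * k) • e := by rw [smul_smul]

lemma mem_idealE_sum {e : E} {ι : Type*} {s : Finset ι} {y : ι → E}
    (hy : ∀ j ∈ s, y j ∈ idealE e) : (∑ j ∈ s, y j) ∈ idealE e := by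
  classical
  induction s using Finset.induction_on with
  | empty => simpa using mem_idealE_zero e
  | insert a s' hnotmem ih =>
      rw [Finset.sum_insert hnotmem]
      exact mem_idealE_add (hy a (Finset.mem_insert_self a s'))
        (ih (fun j hj => hy j (Finset.mem_insert_of_mem hj)))

/-! ### basic facts about T -/

lemma T_pos {T S : E →ₗ[ℝ] E} {e : E} (h : IsCEPS T S e) {x : E} (hx : 0 ≤ x) :
    0 ≤ T x := h.2.2.1.2.2.2.1 x (Set.mem_univ x) hx

lemma T_mono {T S : E →ₗ[ℝ] E} {e : E} (h : IsCEPS T S e) {x y : E} (hxy : x ≤ y) :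
    T x ≤ T y := by
  have := T_pos h (sub_nonneg.2 hxy)
  rw [map_sub] at this
  exact sub_nonneg.1 this

lemma T_idem {T S : E →ₗ[ℝ] E} {e : E} (h : IsCEPS T S e) (x : E) : T (T x) = T x :=
  h.2.2.1.2.2.2.2.2.1 x (Set.mem_univ x)

/-! ### multiplication helpers -/

section mHelpers

variable {e : E} {m : E → E → E} (hm : IsFAlgMulOn e m)
include hm

lemma m_comm {x y : E} (hx : x ∈ idealE e) (hy : y ∈ idealE e) : m x y = m y x :=
  hm.2.1 x hx y hy

lemma m_add_left {x y z : E} (hx : x ∈ idealE e) (hy : y ∈ idealE e) (hz : z ∈ idealE e) :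
    m (x + y) z = m x z + m y z := hm.2.2.1 x hx y hy z hz

lemma m_zero_left {x : E} (hx : x ∈ idealE e) : m 0 x = 0 := by
  have h := m_add_left hm (mem_idealE_zero e) (mem_idealE_zero e) hx
  rw [add_zero] at h
  have := congrArg (fun w => w - m 0 x) h
  simpa using this.symm

lemma m_zero_right {x : E} (hx : x ∈ idealE e) : m x 0 = 0 := by
  rw [m_comm hm hx (mem_idealE_zero e), m_zero_left hm hx]

lemma m_add_right {x y z : E} (hx : x ∈ idealE e) (hy : y ∈ idealE e) (hz : z ∈ idealE e) :
    m x (y + z) = m x y + m x z := by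
  rw [m_comm hm hx (mem_idealE_add hy hz), m_add_left hm hy hz hx,
    m_comm hm hy hx, m_comm hm hz hx]

lemma m_neg_right {x y : E} (hx : x ∈ idealE e) (hy : y ∈ idealE e) :
    m x (-y) = - m x y := by
  have h := m_add_right hm hx hy (mem_idealE_neg hy)
  rw [add_neg_cancel, m_zero_right hm hx] at h
  have := congrArg (fun w => w - m x y) h
  simpa using this.symm.le.antisymm (by simp [this.symm])

lemma m_sub_right {x y z : E} (hx : x ∈ idealE e) (hy : y ∈ idealE e) (hz : z ∈ idealE e) :
    m x (y - z) = m x y - m x z := by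
  rw [sub_eq_add_neg, m_add_right hm hx hy (mem_idealE_neg hz), m_neg_right hm hx hz,
    sub_eq_add_neg]

lemma m_smul_left (r : ℝ) {x y : E} (hx : x ∈ idealE e) (hy : y ∈ idealE e) :
    m (r • x) y = r • m x y := hm.2.2.2.1 r x hx y hy

lemma m_smul_right {r : ℝ} (hr : 0 ≤ r) {x y : E} (hy0 : 0 ≤ y) (hx : x ∈ idealE e)
    (hy : y ∈ idealE e) : m x (r • y) = r • m x y := by
  rw [m_comm hm hx (mem_idealE_smul_nonneg hr hy0 hy), m_smul_left hm r hy hx,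
    m_comm hm hy hx]

lemma m_nonneg {x y : E} (hx : x ∈ idealE e) (hy : y ∈ idealE e) (hx0 : 0 ≤ x)
    (hy0 : 0 ≤ y) : 0 ≤ m x y := hm.2.2.2.2.1 x hx y hy hx0 hy0

lemma m_mono_right {x y z : E} (hx0 : 0 ≤ x) (hx : x ∈ idealE e) (hy : y ∈ idealE e)
    (hz : z ∈ idealE e) (hyz : y ≤ z) : m x y ≤ m x z := by
  have h1 : 0 ≤ m x (z - y) :=
    m_nonneg hm hx (mem_idealE_sub hz hy) hx0 (sub_nonneg.2 hyz)
  rw [m_sub_right hm hx hz hy] at h1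
  exact sub_nonneg.1 h1

lemma m_mono_left {x y z : E} (hx0 : 0 ≤ x) (hx : x ∈ idealE e) (hy : y ∈ idealE e)
    (hz : z ∈ idealE e) (hyz : y ≤ z) : m y x ≤ m z x := by
  rw [m_comm hm hy hx, m_comm hm hz hx]
  exact m_mono_right hm hx0 hx hy hz hyz

lemma m_unit_left {x : E} (hx : x ∈ idealE e) : m e x = x := hm.2.2.2.2.2.1 x hx

lemma m_unit_right {x : E} (he : e ∈ idealE e) (hx : x ∈ idealE e) : m x e = x := by
  rw [m_comm hm hx he, m_unit_left hm hx]

lemma m_sum_right {x : E} (hx : x ∈ idealE e) {ι : Type*} {s : Finset ι} {y : ι → E}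
    (hy : ∀ j ∈ s, y j ∈ idealE e) :
    m x (∑ j ∈ s, y j) = ∑ j ∈ s, m x (y j) := by
  classical
  induction s using Finset.induction_on with
  | empty => simpa using m_zero_right hm hx
  | insert a s' hnotmem ih =>
      rw [Finset.sum_insert hnotmem, Finset.sum_insert hnotmem,
        m_add_right hm hx (hy a (Finset.mem_insert_self a s'))
          (mem_idealE_sum (fun j hj => hy j (Finset.mem_insert_of_mem hj))),
        ih (fun j hj => hy j (Finset.mem_insert_of_mem hj))]

end mHelpers

/-! ### order-limit helpers -/

lemma glb_zero_le {p : ℕ → E} (hant : Antitone p) (hglb : IsGLB (Set.range p) 0)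
    {c : E} (hcp : ∀ n, 1 ≤ n → c ≤ p n) : c ≤ 0 := by
  refine hglb.2 ?_
  rintro x ⟨n, rfl⟩
  rcases Nat.eq_zero_or_pos n with h0 | h1
  · subst h0; exact (hcp 1 le_rfl).trans (hant (by omega))
  · exact hcp n h1

lemma eq_abs_sub_nonpos_aux {a b : E} (h : |a - b| ≤ 0) : a = b := by
  have h1 : a - b ≤ 0 := (le_abs_self _).trans h
  have h2 : 0 ≤ a - b := neg_nonpos.1 ((neg_le_abs _).trans h)
  have := le_antisymm h1 h2
  exact sub_eq_zero.1 this

lemma arch_pow (hD : DedekindCompleteIn (Set.univ : Set E)) {c b : E} (hc : 0 ≤ c)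
    (h : ∀ N : ℕ, ((2:ℝ)^N) • c ≤ b) : c = 0 := by
  refine arch_zero hD hc (b := b) ?_
  intro n
  have hcast : (n:ℝ) ≤ (2:ℝ)^n := by
    have h1 : n < 2^n := Nat.lt_two_pow_self
    have h2 : ((n:ℕ):ℝ) ≤ ((2^n : ℕ):ℝ) := by exact_mod_cast h1.le
    simpa [Nat.cast_pow] using h2
  exact (smul_mono_scalar hc hcast).trans (h n)

/-! ### consequences of weak mixing -/

section ergodicCore

variable {T S : E →ₗ[ℝ] E} {e : E} {m : E → E → E}

lemma wm_eq (h : IsCEPS T S e) (hm : IsFAlgMulOn e m)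
    (hwm : ∀ P Q : E →ₗ[ℝ] E, IsBandProjection P → IsBandProjection Q →
      OrderConv (fun n => (n : ℝ)⁻¹ • ∑ k ∈ Finset.range n,
        |T (m ((S ^ k) (P e)) (Q e)) - m (T (P e)) (T (Q e))|) 0)
    {P Q : E →ₗ[ℝ] E} (hP : IsBandProjection P) (hQ : IsBandProjection Q)
    (hSP : S (P e) = P e) :
    T (m (P e) (Q e)) = m (T (P e)) (T (Q e)) := by
  have hSk : ∀ k : ℕ, (S ^ k) (P e) = P e := by
    intro k
    induction k with
    | zero => simp
    | succ k ih => rw [pow_succ, Module.End.mul_apply, hSP, ih]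
  obtain ⟨p, hant, hglb, hb⟩ := hwm P Q hP hQ
  set c := T (m (P e) (Q e)) - m (T (P e)) (T (Q e)) with hc
  have hcle : ∀ n : ℕ, 1 ≤ n → |c| ≤ p n := by
    intro n hn
    have hb' : |(n : ℝ)⁻¹ • (∑ k ∈ Finset.range n,
        |T (m ((S ^ k) (P e)) (Q e)) - m (T (P e)) (T (Q e))|) - 0| ≤ p n := hb n
    have hsum : (∑ k ∈ Finset.range n,
        |T (m ((S ^ k) (P e)) (Q e)) - m (T (P e)) (T (Q e))|) = n • |c| := by
      rw [Finset.sum_congr rfl (fun k _ => by rw [hSk k]), Finset.sum_const,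
        Finset.card_range]
    have hne : ((n:ℝ)) ≠ 0 := by
      have : 0 < n := hn
      exact_mod_cast this.ne'
    have hseq : (n : ℝ)⁻¹ • (∑ k ∈ Finset.range n,
        |T (m ((S ^ k) (P e)) (Q e)) - m (T (P e)) (T (Q e))|) = |c| := by
      rw [hsum, ← Nat.cast_smul_eq_nsmul ℝ, smul_smul, inv_mul_cancel₀ hne, one_smul]
    rw [sub_zero, hseq, abs_of_nonneg (abs_nonneg c)] at hb'
    exact hb'
  exact eq_abs_sub_nonpos_aux (glb_zero_le hant hglb hcle)

lemma avg_prop (h : IsCEPS T S e) (hm : IsFAlgMulOn e m)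
    (hwm : ∀ P Q : E →ₗ[ℝ] E, IsBandProjection P → IsBandProjection Q →
      OrderConv (fun n => (n : ℝ)⁻¹ • ∑ k ∈ Finset.range n,
        |T (m ((S ^ k) (P e)) (Q e)) - m (T (P e)) (T (Q e))|) 0)
    {P : E →ₗ[ℝ] E} (hP : IsBandProjection P) (hSP : S (P e) = P e)
    {v : E} (hv0 : 0 ≤ v) (hve : v ≤ e) :
    T (m (P e) v) = m (T (P e)) (T v) := by
  have hD := h.1
  have he : 0 ≤ e := h.2.1.1.le
  have hTe : T e = e := h.2.2.2.1
  have hPe0 : 0 ≤ P e := (hP.2 e he).1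
  have hPee : P e ≤ e := (hP.2 e he).2
  have hPeI : P e ∈ idealE e := mem_idealE01 hPe0 hPee
  have heI : e ∈ idealE e := mem_idealE_e he
  have hTPe0 : 0 ≤ T (P e) := T_pos h hPe0
  have hTPee : T (P e) ≤ e := by
    have := T_mono h hPee; rwa [hTe] at this
  have hTPeI : T (P e) ∈ idealE e := mem_idealE01 hTPe0 hTPee
  have hvI : v ∈ idealE e := mem_idealE01 hv0 hve
  have hTv0 : 0 ≤ T v := T_pos h hv0
  have hTve : T v ≤ e := by
    have := T_mono h hve; rwa [hTe] at this
  have hTvI : T v ∈ idealE e := mem_idealE01 hTv0 hTve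
  set c0 := |T (m (P e) v) - m (T (P e)) (T v)| with hc0
  have hkey : ∀ N : ℕ, ((2:ℝ)^N) • c0 ≤ (2:ℝ) • e := by
    intro N
    set t : ℝ := ((2:ℝ)^N)⁻¹ with htdef
    have h2N : (1:ℝ) ≤ (2:ℝ)^N := by
      calc (1:ℝ) = 1^N := (one_pow N).symm
        _ ≤ 2^N := pow_le_pow_left₀ (by norm_num) (by norm_num) N
    have ht : 0 < t := by rw [htdef]; positivity
    have ht1 : t ≤ 1 := by
      rw [htdef]
      exact inv_le_one_of_one_le₀ h2N
    set K : ℕ := 2^N with hKdef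
    have hKt : (1:ℝ) ≤ (K:ℝ) * t := by
      rw [hKdef, htdef]
      push_cast
      rw [mul_inv_cancel₀ (by positivity)]
    have hub1 : v ≤ (1:ℝ) • e := by rwa [one_smul]
    set u := ∑ j ∈ Ico 1 (K+1), t • fCmp hD v e t j with hudef
    have hu1 : u ≤ v := claim1' hD he hv0 ht K
    have hu2 : v ≤ u + t • e := claim2 hD he hv0 ht hub1 hKt
    have hgj : ∀ j : ℕ, 0 ≤ fGap v e t j := fun j => fGap_nonneg j
    have hqj0 : ∀ j : ℕ, 0 ≤ fCmp hD v e t j := fun j => fCmp_nonneg hD he j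
    have hqje : ∀ j : ℕ, fCmp hD v e t j ≤ e := fun j => fCmp_le_e hD j
    have hqjI : ∀ j : ℕ, fCmp hD v e t j ∈ idealE e := fun j => mem_idealE01 (hqj0 j) (hqje j)
    have hTqj0 : ∀ j : ℕ, 0 ≤ T (fCmp hD v e t j) := fun j => T_pos h (hqj0 j)
    have hTqje : ∀ j : ℕ, T (fCmp hD v e t j) ≤ e := fun j => by
      have := T_mono h (hqje j); rwa [hTe] at this
    have hTqjI : ∀ j : ℕ, T (fCmp hD v e t j) ∈ idealE e :=
      fun j => mem_idealE01 (hTqj0 j) (hTqje j)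
    have hwmj : ∀ j : ℕ, T (m (P e) (fCmp hD v e t j))
        = m (T (P e)) (T (fCmp hD v e t j)) := by
      intro j
      have hQ := bProj_isBandProjection hD (hgj j)
      have := wm_eq h hm hwm hP hQ hSP
      rwa [bProj_of_nonneg hD (hgj j) he] at this
    have huI : u ∈ idealE e :=
      mem_idealE_sum (fun j _ => mem_idealE_smul_nonneg ht.le (hqj0 j) (hqjI j))
    have hu0 : 0 ≤ u := Finset.sum_nonneg fun j _ => smul_nonneg ht.le (hqj0 j)
    have hue : u ≤ e := hu1.trans hve
    have hTu0 : 0 ≤ T u := T_pos h hu0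
    have hTue : T u ≤ e := by have := T_mono h hue; rwa [hTe] at this
    have hTuI : T u ∈ idealE e := mem_idealE01 hTu0 hTue
    have hXN : T (m (P e) u) = m (T (P e)) (T u) := by
      have e1 : m (P e) u = ∑ j ∈ Ico 1 (K+1), t • m (P e) (fCmp hD v e t j) := by
        rw [hudef, m_sum_right hm hPeI
          (fun j _ => mem_idealE_smul_nonneg ht.le (hqj0 j) (hqjI j))]
        exact Finset.sum_congr rfl fun j _ => m_smul_right hm ht.le (hqj0 j) hPeI (hqjI j)
      have e2 : T (m (P e) u) = ∑ j ∈ Ico 1 (K+1), t • T (m (P e) (fCmp hD v e t j)) := by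
        rw [e1, map_sum]
        exact Finset.sum_congr rfl fun j _ => by rw [map_smul]
      have e3 : T u = ∑ j ∈ Ico 1 (K+1), t • T (fCmp hD v e t j) := by
        rw [hudef, map_sum]
        exact Finset.sum_congr rfl fun j _ => by rw [map_smul]
      have e4 : m (T (P e)) (T u) = ∑ j ∈ Ico 1 (K+1), t • m (T (P e)) (T (fCmp hD v e t j)) := by
        rw [e3, m_sum_right hm hTPeI
          (fun j _ => mem_idealE_smul_nonneg ht.le (hTqj0 j) (hTqjI j))]
        exact Finset.sum_congr rfl fun j _ =>
          m_smul_right hm ht.le (hTqj0 j) hTPeI (hTqjI j)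
      rw [e2, e4]
      exact Finset.sum_congr rfl fun j _ => by rw [hwmj j]
    have hvu0 : 0 ≤ v - u := sub_nonneg.2 hu1
    have hvut : v - u ≤ t • e := sub_le_iff_le_add'.2 hu2
    have hvuI : v - u ∈ idealE e := mem_idealE_sub hvI huI
    have hteI : t • e ∈ idealE e := mem_idealE_smul_nonneg ht.le he heI
    have hTte : T (t • e) = t • e := by rw [map_smul, hTe]
    have hX : T (m (P e) v) - T (m (P e) u) = T (m (P e) (v - u)) := by
      rw [← map_sub, m_sub_right hm hPeI hvI huI]
    have hXb0 : 0 ≤ T (m (P e) (v - u)) := T_pos h (m_nonneg hm hPeI hvuI hPe0 hvu0)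
    have hXb1 : T (m (P e) (v - u)) ≤ t • e := by
      have h1 : m (P e) (v - u) ≤ m (P e) (t • e) :=
        m_mono_right hm hPe0 hPeI hvuI hteI hvut
      have h2 : m (P e) (t • e) = t • P e := by
        rw [m_smul_right hm ht.le he hPeI heI, m_unit_right hm heI hPeI]
      have h3 : m (P e) (v - u) ≤ t • e :=
        (h1.trans_eq h2).trans (smul_le_smul_vec ht.le hPee)
      calc T (m (P e) (v - u)) ≤ T (t • e) := T_mono h h3
        _ = t • e := hTte
    have hTvu0 : 0 ≤ T v - T u := by rw [← map_sub]; exact T_pos h hvu0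
    have hTvut : T v - T u ≤ t • e := by
      rw [← map_sub]
      calc T (v - u) ≤ T (t • e) := T_mono h hvut
        _ = t • e := hTte
    have hTvuI : T v - T u ∈ idealE e := mem_idealE_sub hTvI hTuI
    have hY : m (T (P e)) (T v) - m (T (P e)) (T u) = m (T (P e)) (T v - T u) :=
      (m_sub_right hm hTPeI hTvI hTuI).symm
    have hYb0 : 0 ≤ m (T (P e)) (T v - T u) := m_nonneg hm hTPeI hTvuI hTPe0 hTvu0
    have hYb1 : m (T (P e)) (T v - T u) ≤ t • e := by
      have h1 : m (T (P e)) (T v - T u) ≤ m (T (P e)) (t • e) :=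
        m_mono_right hm hTPe0 hTPeI hTvuI hteI hTvut
      have h2 : m (T (P e)) (t • e) = t • T (P e) := by
        rw [m_smul_right hm ht.le he hTPeI heI, m_unit_right hm heI hTPeI]
      exact (h1.trans_eq h2).trans (smul_le_smul_vec ht.le hTPee)
    have hceq : T (m (P e) v) - m (T (P e)) (T v)
        = T (m (P e) (v - u)) - m (T (P e)) (T v - T u) := by
      rw [← hX, ← hY, hXN]
      abel
    have hbound : c0 ≤ (2*t) • e := by
      rw [hc0, hceq]
      have habs : |T (m (P e) (v - u)) - m (T (P e)) (T v - T u)|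
          ≤ |T (m (P e) (v - u))| + |m (T (P e)) (T v - T u)| := by
        rw [sub_eq_add_neg]
        exact (abs_add_le _ _).trans_eq (by rw [abs_neg])
      rw [abs_of_nonneg hXb0, abs_of_nonneg hYb0] at habs
      calc |T (m (P e) (v - u)) - m (T (P e)) (T v - T u)|
          ≤ T (m (P e) (v - u)) + m (T (P e)) (T v - T u) := habs
        _ ≤ t • e + t • e := add_le_add hXb1 hYb1
        _ = (2*t) • e := by rw [two_mul, add_smul]
    have := smul_le_smul_vec (by positivity : (0:ℝ) ≤ (2:ℝ)^N) hbound
    rw [smul_smul] at this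
    have harith : (2:ℝ)^N * (2*t) = 2 := by
      rw [htdef]
      field_simp
    rwa [harith] at this
  have := arch_pow hD (abs_nonneg _) hkey
  exact eq_abs_sub_nonpos_aux this.le

end ergodicCore

section ergodicMain

variable {T S : E →ₗ[ℝ] E} {e : E} {m : E → E → E}

lemma proj_le_T (h : IsCEPS T S e) (hsp : ∀ f : E, 0 ≤ f → T f = 0 → f = 0)
    (hm : IsFAlgMulOn e m)
    (hwm : ∀ P Q : E →ₗ[ℝ] E, IsBandProjection P → IsBandProjection Q →
      OrderConv (fun n => (n : ℝ)⁻¹ • ∑ k ∈ Finset.range n,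
        |T (m ((S ^ k) (P e)) (Q e)) - m (T (P e)) (T (Q e))|) 0)
    {P : E →ₗ[ℝ] E} (hP : IsBandProjection P) (hSP : S (P e) = P e) :
    P e ≤ T (P e) := by
  have he : 0 ≤ e := h.2.1.1.le
  have hTe : T e = e := h.2.2.2.1
  have hPe0 : 0 ≤ P e := (hP.2 e he).1
  have hPee : P e ≤ e := (hP.2 e he).2
  have hPeI : P e ∈ idealE e := mem_idealE01 hPe0 hPee
  have heI : e ∈ idealE e := mem_idealE_e he
  have hTPe0 : 0 ≤ T (P e) := T_pos h hPe0
  have hTPee : T (P e) ≤ e := by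
    have := T_mono h hPee; rwa [hTe] at this
  have hTPeI : T (P e) ∈ idealE e := mem_idealE01 hTPe0 hTPee
  have hTPP : m (T (P e)) (T (P e)) = T (P e) := by
    have h1 := wm_eq h hm hwm hP hP hSP
    have h2 : m (P e) (P e) = P e := by
      rw [hm.2.2.2.2.2.2.1 P P hP hP, hP.1 e]
    rw [h2] at h1
    exact h1.symm
  have hv0 : 0 ≤ e - T (P e) := sub_nonneg.2 hTPee
  have hve : e - T (P e) ≤ e := sub_le_self e hTPe0
  have havg := avg_prop h hm hwm hP hSP hv0 hve
  have hTsub : T (e - T (P e)) = e - T (P e) := by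
    rw [map_sub, hTe, T_idem h]
  have hrhs : m (T (P e)) (T (e - T (P e))) = 0 := by
    rw [hTsub, m_sub_right hm hTPeI heI hTPeI, m_unit_right hm heI hTPeI, hTPP, sub_self]
  rw [hrhs] at havg
  have hmm0 : m (P e) (e - T (P e)) = 0 :=
    hsp _ (m_nonneg hm hPeI (mem_idealE_sub heI hTPeI) hPe0 hv0) havg
  have hexp : m (P e) e - m (P e) (T (P e)) = 0 := by
    rw [← m_sub_right hm hPeI heI hTPeI, hmm0]
  have hPeeq : P e = m (P e) (T (P e)) := by
    have h3 := sub_eq_zero.1 hexp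
    rw [m_unit_right hm heI hPeI] at h3
    exact h3
  calc P e = m (P e) (T (P e)) := hPeeq
    _ ≤ m e (T (P e)) := m_mono_left hm hTPe0 hTPeI hPeI heI hPee
    _ = T (P e) := m_unit_left hm hTPeI

lemma proj_fixed (h : IsCEPS T S e) (hsp : ∀ f : E, 0 ≤ f → T f = 0 → f = 0)
    (hm : IsFAlgMulOn e m)
    (hwm : ∀ P Q : E →ₗ[ℝ] E, IsBandProjection P → IsBandProjection Q →
      OrderConv (fun n => (n : ℝ)⁻¹ • ∑ k ∈ Finset.range n,
        |T (m ((S ^ k) (P e)) (Q e)) - m (T (P e)) (T (Q e))|) 0)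
    {P : E →ₗ[ℝ] E} (hP : IsBandProjection P) (hSP : S (P e) = P e) :
    T (P e) = P e := by
  have hTe : T e = e := h.2.2.2.1
  have hSe : S e = e := h.2.2.2.2.2.2.1
  have h1 := proj_le_T h hsp hm hwm hP hSP
  set P' : E →ₗ[ℝ] E := LinearMap.id - P with hP'def
  have hP'app : ∀ x, P' x = x - P x := fun x => by
    simp [hP'def, LinearMap.sub_apply]
  have hP' : IsBandProjection P' := by
    constructor
    · intro f
      simp only [hP'def, LinearMap.sub_apply, LinearMap.id_apply, map_sub, hP.1 f]
      abel
    · intro f hf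
      simp only [hP'def, LinearMap.sub_apply, LinearMap.id_apply]
      exact ⟨sub_nonneg.2 (hP.2 f hf).2, sub_le_self f (hP.2 f hf).1⟩
  have hSP' : S (P' e) = P' e := by
    rw [hP'app, map_sub, hSe, hSP]
  have h2 := proj_le_T h hsp hm hwm hP' hSP'
  rw [hP'app, map_sub, hTe] at h2
  have h3 : T (P e) ≤ P e := by
    exact (sub_le_sub_iff_left e).1 h2
  exact le_antisymm h3 h1

lemma bdd_fixed (h : IsCEPS T S e) (hsp : ∀ f : E, 0 ≤ f → T f = 0 → f = 0)
    (hm : IsFAlgMulOn e m)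
    (hwm : ∀ P Q : E →ₗ[ℝ] E, IsBandProjection P → IsBandProjection Q →
      OrderConv (fun n => (n : ℝ)⁻¹ • ∑ k ∈ Finset.range n,
        |T (m ((S ^ k) (P e)) (Q e)) - m (T (P e)) (T (Q e))|) 0)
    {f : E} (hSf : S f = f) (hf0 : 0 ≤ f) {M : ℕ} (hfM : f ≤ (M:ℝ) • e) :
    T f = f := by
  have hD := h.1
  have he : 0 ≤ e := h.2.1.1.le
  have hTe : T e = e := h.2.2.2.1
  have hS : IsRieszHom S := h.2.2.2.2.1
  have hSc : OrderContinuousOp S := h.2.2.2.2.2.1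
  have hSe : S e = e := h.2.2.2.2.2.2.1
  have hkey : ∀ N : ℕ, ((2:ℝ)^N) • |T f - f| ≤ (2:ℝ) • e := by
    intro N
    set t : ℝ := ((2:ℝ)^N)⁻¹ with htdef
    have ht : 0 < t := by rw [htdef]; positivity
    set K : ℕ := M * 2^N with hKdef
    have hKt : (M:ℝ) ≤ (K:ℝ) * t := by
      rw [hKdef, htdef]
      push_cast
      rw [mul_assoc, mul_inv_cancel₀ (by positivity), mul_one]
    set u := ∑ j ∈ Ico 1 (K+1), t • fCmp hD f e t j with hudef
    have hu1 : u ≤ f := claim1' hD he hf0 ht K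
    have hu2 : f ≤ u + t • e := claim2 hD he hf0 ht hfM hKt
    have hTqj : ∀ j : ℕ, T (fCmp hD f e t j) = fCmp hD f e t j := by
      intro j
      have hgj0 : 0 ≤ fGap f e t j := fGap_nonneg j
      have hSgj : S (fGap f e t j) = fGap f e t j := by
        show S ((f - ((j:ℝ)*t) • e)⁺) = (f - ((j:ℝ)*t) • e)⁺
        rw [riesz_hom_posPart hS, map_sub, map_smul, hSe, hSf]
      have hqfix : S (fCmp hD f e t j) = fCmp hD f e t j :=
        pPart_S_fixed hD hS hSc hSe hSgj hgj0
      have hQbp := bProj_isBandProjection hD hgj0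
      have hfix2 : S (bProj hD hgj0 e) = bProj hD hgj0 e := by
        rwa [bProj_of_nonneg hD hgj0 he]
      have := proj_fixed h hsp hm hwm hQbp hfix2
      rwa [bProj_of_nonneg hD hgj0 he] at this
    have hTu : T u = u := by
      rw [hudef, map_sum]
      exact Finset.sum_congr rfl fun j _ => by rw [map_smul, hTqj j]
    have hfu0 : 0 ≤ f - u := sub_nonneg.2 hu1
    have hfut : f - u ≤ t • e := sub_le_iff_le_add'.2 hu2
    have hceq : T f - f = T (f - u) - (f - u) := by
      rw [map_sub, hTu]
      abel
    have hbound : |T f - f| ≤ (2*t) • e := by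
      rw [hceq]
      have habs : |T (f - u) - (f - u)| ≤ |T (f - u)| + |f - u| := by
        rw [sub_eq_add_neg]
        exact (abs_add_le _ _).trans_eq (by rw [abs_neg])
      have h1 : 0 ≤ T (f - u) := T_pos h hfu0
      have h2 : T (f - u) ≤ t • e := by
        calc T (f - u) ≤ T (t • e) := T_mono h hfut
          _ = t • e := by rw [map_smul, hTe]
      rw [abs_of_nonneg h1, abs_of_nonneg hfu0] at habs
      calc |T (f - u) - (f - u)| ≤ T (f - u) + (f - u) := habs
        _ ≤ t • e + t • e := add_le_add h2 hfut
        _ = (2*t) • e := by rw [two_mul, add_smul]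
    have := smul_le_smul_vec (by positivity : (0:ℝ) ≤ (2:ℝ)^N) hbound
    rw [smul_smul] at this
    have harith : (2:ℝ)^N * (2*t) = 2 := by
      rw [htdef]
      field_simp
    rwa [harith] at this
  have := arch_pow hD (abs_nonneg _) hkey
  exact eq_abs_sub_nonpos_aux this.le

lemma pos_fixed (h : IsCEPS T S e) (hsp : ∀ f : E, 0 ≤ f → T f = 0 → f = 0)
    (hm : IsFAlgMulOn e m)
    (hwm : ∀ P Q : E →ₗ[ℝ] E, IsBandProjection P → IsBandProjection Q →
      OrderConv (fun n => (n : ℝ)⁻¹ • ∑ k ∈ Finset.range n,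
        |T (m ((S ^ k) (P e)) (Q e)) - m (T (P e)) (T (Q e))|) 0)
    {f : E} (hSf : S f = f) (hf0 : 0 ≤ f) : T f = f := by
  have hD := h.1
  have hwu := h.2.1
  have he : 0 ≤ e := hwu.1.le
  have hS : IsRieszHom S := h.2.2.2.2.1
  have hSe : S e = e := h.2.2.2.2.2.2.1
  have hMe : ∀ M : ℕ, (0:E) ≤ (M:ℝ) • e := fun M => smul_nonneg (by positivity) he
  have hfM_fix : ∀ M : ℕ, T (f ⊓ (M:ℝ) • e) = f ⊓ (M:ℝ) • e := by
    intro M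
    have hSfM : S (f ⊓ (M:ℝ) • e) = f ⊓ (M:ℝ) • e := by
      rw [riesz_hom_inf hS, hSf, map_smul, hSe]
    exact bdd_fixed h hsp hm hwm hSfM (le_inf hf0 (hMe M)) inf_le_right
  have hlub : IsLUB (Set.range fun M : ℕ => f ⊓ (M:ℝ) • e) f := by
    obtain ⟨σ, hσ⟩ := exists_isLUB' hD (Set.range fun M : ℕ => f ⊓ (M:ℝ) • e) ⟨_, ⟨0, rfl⟩⟩
      ⟨f, by rintro x ⟨M, rfl⟩; exact inf_le_left⟩
    have hσf : σ ≤ f := hσ.2 (by rintro x ⟨M, rfl⟩; exact inf_le_left)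
    set d := f - σ with hd
    have hd0 : 0 ≤ d := sub_nonneg.2 hσf
    set cl := d ⊓ e with hcl
    have hcl0 : 0 ≤ cl := le_inf hd0 he
    have hstep : ∀ M : ℕ, cl + f ⊓ (M:ℝ) • e ≤ f ⊓ ((M+1:ℕ):ℝ) • e := by
      intro M
      refine le_inf ?_ ?_
      · calc cl + f ⊓ (M:ℝ) • e ≤ d + f ⊓ (M:ℝ) • e := add_le_add_left inf_le_left _
          _ ≤ (f - f ⊓ (M:ℝ) • e) + f ⊓ (M:ℝ) • e :=
              add_le_add_left (sub_le_sub_left (hσ.1 ⟨M, rfl⟩) f) _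
          _ = f := by abel
      · calc cl + f ⊓ (M:ℝ) • e ≤ e + (M:ℝ) • e := add_le_add inf_le_right inf_le_right
          _ = ((M+1:ℕ):ℝ) • e := by push_cast; rw [add_smul, one_smul]; abel
    have hind : ∀ M : ℕ, (M:ℝ) • cl ≤ f ⊓ (M:ℝ) • e := by
      intro M
      induction M with
      | zero =>
          simp only [Nat.cast_zero, zero_smul]
          exact le_inf hf0 le_rfl |>.trans (le_inf inf_le_left inf_le_right) |>.trans le_rfl
      | succ M ih =>
          have hcast : ((M+1:ℕ):ℝ) • cl = (M:ℝ) • cl + cl := by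
            push_cast; rw [add_smul, one_smul]
          rw [hcast]
          calc (M:ℝ) • cl + cl ≤ f ⊓ (M:ℝ) • e + cl := add_le_add_left ih _
            _ = cl + f ⊓ (M:ℝ) • e := by abel
            _ ≤ f ⊓ ((M+1:ℕ):ℝ) • e := hstep M
    have hcl_zero : cl = 0 :=
      arch_zero hD hcl0 (b := σ) (fun M => (hind M).trans (hσ.1 ⟨M, rfl⟩))
    have hdzero : d = 0 := hwu.2 d (Set.mem_univ d) hd0 hcl_zero
    have hσeq : σ = f := by
      rw [hd] at hdzero
      have := sub_eq_zero.1 hdzero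
      exact this.symm
    rwa [hσeq] at hσ
  have hTplower : f ≤ T f := by
    refine hlub.2 ?_
    rintro x ⟨M, rfl⟩
    show f ⊓ (M:ℝ) • e ≤ T f
    rw [← hfM_fix M]
    exact T_mono h inf_le_left
  have hclause5 := h.2.2.1.2.2.2.2.1
  set A : Set E := Set.range fun M : ℕ => (f - (M:ℝ) • e)⁺ with hA
  have hrel : ∀ M : ℕ, (f - (M:ℝ) • e)⁺ = f - f ⊓ (M:ℝ) • e := by
    intro M
    have h1 := sub_posPart_sub f ((M:ℝ) • e)
    rw [← h1]
    abel
  have hAne : A.Nonempty := ⟨_, ⟨0, rfl⟩⟩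
  have hdir : DirectedOn (· ≥ ·) A := by
    rintro x ⟨a, rfl⟩ y ⟨b, rfl⟩
    refine ⟨(f - ((max a b : ℕ):ℝ) • e)⁺, ⟨max a b, rfl⟩, ?_, ?_⟩
    · exact posPart_mono (sub_le_sub_left
        (smul_mono_scalar he (by exact_mod_cast le_max_left a b)) f)
    · exact posPart_mono (sub_le_sub_left
        (smul_mono_scalar he (by exact_mod_cast le_max_right a b)) f)
  have hglbA : IsGLBIn (Set.univ) A 0 := by
    constructor
    · rintro x ⟨M, rfl⟩; exact posPart_nonneg _
    · intro b _ hb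
      have h1 : ∀ M : ℕ, f ⊓ (M:ℝ) • e ≤ f - b := by
        intro M
        have h2 : b ≤ (f - (M:ℝ) • e)⁺ := hb _ ⟨M, rfl⟩
        rw [hrel M] at h2
        rw [le_sub_iff_add_le]
        have h3 := add_le_add_left h2 (f ⊓ (M:ℝ) • e)
        rw [sub_add_cancel] at h3
        rwa [add_comm] at h3
      have h2 : f ≤ f - b := hlub.2 (by rintro x ⟨M, rfl⟩; exact h1 M)
      have h3 := le_sub_iff_add_le.1 h2
      rwa [add_comm, add_le_iff_nonpos_left] at h3
  have hglbT := hclause5 A (Set.subset_univ A) hAne hdir hglbA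
  have hTfb : ∀ a ∈ T '' A, T f - f ≤ a := by
    rintro x ⟨y, ⟨M, rfl⟩, rfl⟩
    show T f - f ≤ T ((f - (M:ℝ) • e)⁺)
    rw [hrel M, map_sub, hfM_fix M]
    exact sub_le_sub_left inf_le_left (T f)
  have hTfle : T f - f ≤ 0 := hglbT.2 (T f - f) (Set.mem_univ _) hTfb
  exact le_antisymm (sub_nonpos.1 hTfle) hTplower

theorem ergodic_of_weakMixing_aux (T S : E →ₗ[ℝ] E) (e : E) (h : IsCEPS T S e)
    (hsp : ∀ f : E, 0 ≤ f → T f = 0 → f = 0)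
    (m : E → E → E) (hm : IsFAlgMulOn e m)
    (hwm : ∀ P Q : E →ₗ[ℝ] E, IsBandProjection P → IsBandProjection Q →
      OrderConv (fun n => (n : ℝ)⁻¹ • ∑ k ∈ Finset.range n,
        |T (m ((S ^ k) (P e)) (Q e)) - m (T (P e)) (T (Q e))|) 0) :
    IsErgodic T S e := by
  intro f l hSf hconv
  have hS : IsRieszHom S := h.2.2.2.2.1
  have hSk : ∀ k : ℕ, (S ^ k) f = f := by
    intro k
    induction k with
    | zero => simp
    | succ k ih => rw [pow_succ, Module.End.mul_apply, hSf, ih]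
  have hces : ∀ n : ℕ, 1 ≤ n → ces S f n = f := by
    intro n hn
    have hne : ((n:ℝ)) ≠ 0 := by
      have : 0 < n := hn
      exact_mod_cast this.ne'
    show (n : ℝ)⁻¹ • ∑ k ∈ Finset.range n, (S ^ k) f = f
    rw [Finset.sum_congr rfl (fun k _ => hSk k), Finset.sum_const, Finset.card_range,
      ← Nat.cast_smul_eq_nsmul ℝ, smul_smul, inv_mul_cancel₀ hne, one_smul]
  obtain ⟨p, hant, hglb, hb⟩ := hconv
  have hlf : ∀ n, 1 ≤ n → |f - l| ≤ p n := by
    intro n hn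
    have := hb n
    rwa [hces n hn] at this
  have hfl : f = l := eq_abs_sub_nonpos_aux (glb_zero_le hant hglb hlf)
  have hfp : S f⁺ = f⁺ := by rw [riesz_hom_posPart hS, hSf]
  have hfn : S f⁻ = f⁻ := by
    have hrepr : f⁻ = (-f)⁺ := by rw [negPart_def, posPart_def]
    rw [hrepr, riesz_hom_posPart hS, map_neg, hSf]
  have h1 := pos_fixed h hsp hm hwm hfp (posPart_nonneg f)
  have h2 := pos_fixed h hsp hm hwm hfn (negPart_nonneg f)
  have hTf : T f = f := by
    conv_lhs => rw [← posPart_sub_negPart f]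
    rw [map_sub, h1, h2, posPart_sub_negPart f]
  exact ⟨f, hTf.trans hfl⟩

end ergodicMain


end AuxErgodicProof

/-- Corollary 4.2: with `T` strictly positive, conditional weak mixing implies
ergodicity. -/
theorem ergodic_of_weakMixing (T S : E →ₗ[ℝ] E) (e : E) (h : IsCEPS T S e)
    (hsp : ∀ f : E, 0 ≤ f → T f = 0 → f = 0)
    (m : E → E → E) (hm : IsFAlgMulOn e m)
    (hwm : ∀ P Q : E →ₗ[ℝ] E, IsBandProjection P → IsBandProjection Q →
      OrderConv (fun n => (n : ℝ)⁻¹ • ∑ k ∈ Finset.range n,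
        |T (m ((S ^ k) (P e)) (Q e)) - m (T (P e)) (T (Q e))|) 0) :
    IsErgodic T S e := by
  exact ergodic_of_weakMixing_aux T S e h hsp m hm hwm
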